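/- Let λ, μ ∈ ℝ, δ = μ − λ, and let X be an affine vector field on ℝⁿ, i.e. X^i(x) = B^i_j x^j + c^i for a constant matrix B and constant vector c. Then for every second-order operator A with coefficients (A₂, A₁, A₀), the operator L_X^μ ∘ A − A ∘ L_X^λ is again a second-order operator, and its coefficients are exactly (L_X^δ A₂, L_X^δ A₁, L_X^δ A₀), i.e. each coefficient transforms as a symbol component of weight δ. -/

import Mathlib

open scoped BigOperators

noncomputable section

/-- Partial derivative of a function on `ℝⁿ` in the `i`-th coordinate direction. -/
def pd {n : ℕ} (i : Fin n) (f : (Fin n → ℝ) → ℝ) : (Fin n → ℝ) → ℝ :=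
  fun x => fderiv ℝ f x (Pi.single i 1)

/-- Diagonal entries of the flat metric of signature `(p, n−p)`. -/
def sgn (p : ℕ) {n : ℕ} (i : Fin n) : ℝ := if (i : ℕ) < p then 1 else -1

/-- Flat metric `g_{ij} = g^{ij} = diag(1,…,1,−1,…,−1)`. -/
def gmet (p : ℕ) {n : ℕ} (i j : Fin n) : ℝ := if i = j then sgn p i else 0

/-- Divergence of a vector field on `ℝⁿ`. -/
def divg {n : ℕ} (X : Fin n → (Fin n → ℝ) → ℝ) : (Fin n → ℝ) → ℝ :=
  fun x => ∑ k, pd k (X k) x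

/-- Lie derivative of a weight-`l` density (in the trivialization). -/
def lieF {n : ℕ} (X : Fin n → (Fin n → ℝ) → ℝ) (l : ℝ) (f : (Fin n → ℝ) → ℝ) :
    (Fin n → ℝ) → ℝ :=
  fun x => (∑ k, X k x * pd k f x) + l * divg X x * f x

/-- Weight-`d` action of a vector field on the degree-2 component of a symbol. -/
def lieS2 {n : ℕ} (X : Fin n → (Fin n → ℝ) → ℝ) (d : ℝ)
    (P2 : Fin n → Fin n → (Fin n → ℝ) → ℝ) : Fin n → Fin n → (Fin n → ℝ) → ℝ :=
  fun i j x => (∑ k, X k x * pd k (P2 i j) x) - (∑ k, P2 k j x * pd k (X i) x)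
    - (∑ k, P2 i k x * pd k (X j) x) + d * divg X x * P2 i j x

/-- Weight-`d` action of a vector field on the degree-1 component of a symbol. -/
def lieS1 {n : ℕ} (X : Fin n → (Fin n → ℝ) → ℝ) (d : ℝ)
    (P1 : Fin n → (Fin n → ℝ) → ℝ) : Fin n → (Fin n → ℝ) → ℝ :=
  fun i x => (∑ k, X k x * pd k (P1 i) x) - (∑ k, P1 k x * pd k (X i) x)
    + d * divg X x * P1 i x

/-- The second-order differential operator with coefficients `(A2, A1, A0)`. -/
def op2 {n : ℕ} (A2 : Fin n → Fin n → (Fin n → ℝ) → ℝ) (A1 : Fin n → (Fin n → ℝ) → ℝ)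
    (A0 : (Fin n → ℝ) → ℝ) (f : (Fin n → ℝ) → ℝ) : (Fin n → ℝ) → ℝ :=
  fun x => (∑ i, ∑ j, A2 i j x * pd i (pd j f) x) + (∑ i, A1 i x * pd i f x) + A0 x * f x

section Helpers
variable {n : ℕ}

variable {n : ℕ}

lemma pd_congr {i : Fin n} {f g : (Fin n → ℝ) → ℝ} (h : ∀ x, f x = g x) : pd i f = pd i g := by
  have : f = g := funext h
  rw [this]

lemma contDiff_pd (i : Fin n) {f : (Fin n → ℝ) → ℝ} (hf : ContDiff ℝ (⊤ : ℕ∞) f) :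
    ContDiff ℝ (⊤ : ℕ∞) (pd i f) := by
  have h1 : ContDiff ℝ (⊤ : ℕ∞) (fderiv ℝ f) := hf.fderiv_right (by simp)
  exact h1.clm_apply contDiff_const

lemma pd_add {i : Fin n} {f g : (Fin n → ℝ) → ℝ} {x : Fin n → ℝ}
    (hf : DifferentiableAt ℝ f x) (hg : DifferentiableAt ℝ g x) :
    pd i (fun y => f y + g y) x = pd i f x + pd i g x := by
  simp [pd, fderiv_fun_add hf hg]

lemma pd_mul {i : Fin n} {f g : (Fin n → ℝ) → ℝ} {x : Fin n → ℝ}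
    (hf : DifferentiableAt ℝ f x) (hg : DifferentiableAt ℝ g x) :
    pd i (fun y => f y * g y) x = pd i f x * g x + f x * pd i g x := by
  simp [pd, fderiv_fun_mul hf hg]; ring

lemma pd_const {i : Fin n} {a : ℝ} {x : Fin n → ℝ} : pd i (fun _ => a) x = 0 := by
  simp [pd]

lemma pd_sum {i : Fin n} {m : ℕ} {F : Fin m → (Fin n → ℝ) → ℝ} {x : Fin n → ℝ}
    (hF : ∀ k, DifferentiableAt ℝ (F k) x) :
    pd i (fun y => ∑ k, F k y) x = ∑ k, pd i (F k) x := by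
  simp [pd, fderiv_fun_sum (fun k _ => hF k)]

lemma pd_comm {i j : Fin n} {f : (Fin n → ℝ) → ℝ} (hf : ContDiff ℝ (⊤ : ℕ∞) f) (x : Fin n → ℝ) :
    pd i (pd j f) x = pd j (pd i f) x := by
  have hsymm : IsSymmSndFDerivAt ℝ f x := hf.contDiffAt.isSymmSndFDerivAt (by
    rw [minSmoothness_of_isRCLikeNormedField]; exact WithTop.coe_le_coe.mpr le_top)
  have hd : DifferentiableAt ℝ (fderiv ℝ f) x :=
    (hf.fderiv_right (m := (⊤ : ℕ∞)) (by simp)).differentiable (by simp) x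
  have key : ∀ (a : Fin n) (w : Fin n → ℝ),
      pd a (fun y => fderiv ℝ f y w) x = fderiv ℝ (fderiv ℝ f) x (Pi.single a 1) w := by
    intro a w
    simp only [pd]
    rw [fderiv_clm_apply hd (differentiableAt_const _)]
    simp
  have e1 : pd i (pd j f) x = fderiv ℝ (fderiv ℝ f) x (Pi.single i 1) (Pi.single j 1) :=
    key i (Pi.single j 1)
  have e2 : pd j (pd i f) x = fderiv ℝ (fderiv ℝ f) x (Pi.single j 1) (Pi.single i 1) :=
    key j (Pi.single i 1)
  rw [e1, e2, hsymm.eq]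

section Affine
variable {B : Fin n → Fin n → ℝ} {c : Fin n → ℝ} {X : Fin n → (Fin n → ℝ) → ℝ}

lemma pd_coord {k j : Fin n} {x : Fin n → ℝ} :
    pd k (fun y : Fin n → ℝ => y j) x = if j = k then 1 else 0 := by
  have h : fderiv ℝ (fun y : Fin n → ℝ => y j) x
      = (ContinuousLinearMap.proj j : (Fin n → ℝ) →L[ℝ] ℝ) :=
    (ContinuousLinearMap.proj (R := ℝ) (φ := fun _ : Fin n => ℝ) j).fderiv
  simp [pd, h, ContinuousLinearMap.proj_apply, Pi.single_apply]

lemma contDiff_X (hX : ∀ i x, X i x = (∑ j, B i j * x j) + c i) (i : Fin n) :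
    ContDiff ℝ (⊤ : ℕ∞) (X i) := by
  have : X i = fun x => (∑ j, B i j * x j) + c i := funext (hX i)
  rw [this]
  refine ContDiff.add ?_ contDiff_const
  exact ContDiff.sum fun j _ => contDiff_const.mul
    ((ContinuousLinearMap.proj (R := ℝ) (φ := fun _ : Fin n => ℝ) j).contDiff)

lemma pd_X (hX : ∀ i x, X i x = (∑ j, B i j * x j) + c i) (k i : Fin n) (x : Fin n → ℝ) :
    pd k (X i) x = B i k := by
  rw [pd_congr (hX i)]
  have hdiff : ∀ j : Fin n, DifferentiableAt ℝ (fun y : Fin n → ℝ => B i j * y j) x :=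
    fun j => (differentiableAt_const _).mul
      ((ContinuousLinearMap.proj (R := ℝ) (φ := fun _ : Fin n => ℝ) j).differentiableAt)
  have h1 : pd k (fun y : Fin n → ℝ => (∑ j, B i j * y j) + c i) x
      = pd k (fun y : Fin n → ℝ => ∑ j, B i j * y j) x + pd k (fun _ => c i) x :=
    pd_add (DifferentiableAt.fun_sum fun j _ => hdiff j) (differentiableAt_const _)
  rw [h1, pd_const, pd_sum hdiff]
  have h2 : ∀ j : Fin n, pd k (fun y : Fin n → ℝ => B i j * y j) x
      = B i j * (if j = k then 1 else 0) := by
    intro j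
    have hgj : DifferentiableAt ℝ (fun y : Fin n → ℝ => y j) x :=
      (ContinuousLinearMap.proj (R := ℝ) (φ := fun _ : Fin n => ℝ) j).differentiableAt
    rw [pd_mul (differentiableAt_const _) hgj, pd_const, pd_coord]
    ring
  simp [h2, Finset.sum_ite_eq', mul_ite]

end Affine



section Affine2
variable {B : Fin n → Fin n → ℝ} {c : Fin n → ℝ} {X : Fin n → (Fin n → ℝ) → ℝ}

lemma divg_X (hX : ∀ i x, X i x = (∑ j, B i j * x j) + c i) (y : Fin n → ℝ) :
    divg X y = ∑ m, B m m := by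
  simp [divg, pd_X hX]

lemma pd_lieF (hX : ∀ i x, X i x = (∑ j, B i j * x j) + c i)
    (l : ℝ) (g : (Fin n → ℝ) → ℝ) (hg : ContDiff ℝ (⊤ : ℕ∞) g) (j : Fin n) (y : Fin n → ℝ) :
    pd j (lieF X l g) y
      = (∑ k, (B k j * pd k g y + X k y * pd j (pd k g) y))
        + l * (∑ m, B m m) * pd j g y := by
  have hXd : ∀ k (z : Fin n → ℝ), DifferentiableAt ℝ (X k) z :=
    fun k z => ((contDiff_X hX k).differentiable (by simp)) z
  have hgd : ∀ (k : Fin n) (z : Fin n → ℝ), DifferentiableAt ℝ (pd k g) z :=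
    fun k z => ((contDiff_pd k hg).differentiable (by simp)) z
  have hfe : lieF X l g = fun z => (∑ k, X k z * pd k g z) + (l * (∑ m, B m m)) * g z := by
    funext z
    simp only [lieF, divg_X hX z]
  rw [hfe]
  have hterm : ∀ k : Fin n, DifferentiableAt ℝ (fun z => X k z * pd k g z) y :=
    fun k => (hXd k y).mul (hgd k y)
  rw [pd_add (DifferentiableAt.fun_sum fun k _ => hterm k)
    ((differentiableAt_const _).fun_mul ((hg.differentiable (by simp)) y)),
    pd_sum hterm,
    pd_mul (differentiableAt_const _) ((hg.differentiable (by simp)) y), pd_const]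
  have hk : ∀ k : Fin n, pd j (fun z => X k z * pd k g z) y
      = B k j * pd k g y + X k y * pd j (pd k g) y := by
    intro k
    rw [pd_mul (hXd k y) (hgd k y), pd_X hX]
  simp only [hk]
  ring
end Affine2

section Affine3
variable {B : Fin n → Fin n → ℝ} {c : Fin n → ℝ} {X : Fin n → (Fin n → ℝ) → ℝ}

lemma pd_pd_lieF (hX : ∀ i x, X i x = (∑ j, B i j * x j) + c i)
    (l : ℝ) (g : (Fin n → ℝ) → ℝ) (hg : ContDiff ℝ (⊤ : ℕ∞) g) (i j : Fin n) (y : Fin n → ℝ) :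
    pd i (pd j (lieF X l g)) y
      = (∑ k, (B k j * pd i (pd k g) y
          + (B k i * pd j (pd k g) y + X k y * pd i (pd j (pd k g)) y)))
        + l * (∑ m, B m m) * pd i (pd j g) y := by
  have hXd : ∀ k (z : Fin n → ℝ), DifferentiableAt ℝ (X k) z :=
    fun k z => ((contDiff_X hX k).differentiable (by simp)) z
  have hg1 : ∀ (k : Fin n), ContDiff ℝ (⊤ : ℕ∞) (pd k g) := fun k => contDiff_pd k hg
  have hg2 : ∀ (a k : Fin n), ContDiff ℝ (⊤ : ℕ∞) (pd a (pd k g)) :=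
    fun a k => contDiff_pd a (hg1 k)
  have hfe : pd j (lieF X l g)
      = fun z => (∑ k, (B k j * pd k g z + X k z * pd j (pd k g) z))
          + l * (∑ m, B m m) * pd j g z := funext (pd_lieF hX l g hg j)
  rw [hfe]
  have hterm : ∀ k : Fin n,
      DifferentiableAt ℝ (fun z => B k j * pd k g z + X k z * pd j (pd k g) z) y :=
    fun k => ((differentiableAt_const _).mul ((hg1 k).differentiable (by simp) y)).add
      ((hXd k y).mul ((hg2 j k).differentiable (by simp) y))
  rw [pd_add (DifferentiableAt.fun_sum fun k _ => hterm k)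
      ((differentiableAt_const _).fun_mul ((hg1 j).differentiable (by simp) y)),
    pd_sum hterm,
    pd_mul (differentiableAt_const _) ((hg1 j).differentiable (by simp) y), pd_const]
  have hk : ∀ k : Fin n,
      pd i (fun z => B k j * pd k g z + X k z * pd j (pd k g) z) y
        = B k j * pd i (pd k g) y
          + (B k i * pd j (pd k g) y + X k y * pd i (pd j (pd k g)) y) := by
    intro k
    rw [pd_add ((differentiableAt_const _).fun_mul ((hg1 k).differentiable (by simp) y))
        ((hXd k y).fun_mul ((hg2 j k).differentiable (by simp) y)),
      pd_mul (differentiableAt_const _) ((hg1 k).differentiable (by simp) y), pd_const,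
      pd_mul (hXd k y) ((hg2 j k).differentiable (by simp) y), pd_X hX]
    ring
  simp only [hk]
  ring
end Affine3


lemma pd_op2 {A2 : Fin n → Fin n → (Fin n → ℝ) → ℝ} {A1 : Fin n → (Fin n → ℝ) → ℝ}
    {A0 : (Fin n → ℝ) → ℝ} {f : (Fin n → ℝ) → ℝ}
    (hA2 : ∀ i j, ContDiff ℝ (⊤ : ℕ∞) (A2 i j)) (hA1 : ∀ i, ContDiff ℝ (⊤ : ℕ∞) (A1 i))
    (hA0 : ContDiff ℝ (⊤ : ℕ∞) A0) (hf : ContDiff ℝ (⊤ : ℕ∞) f) (k : Fin n) (y : Fin n → ℝ) :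
    pd k (op2 A2 A1 A0 f) y
      = (∑ i, ∑ j, (pd k (A2 i j) y * pd i (pd j f) y + A2 i j y * pd k (pd i (pd j f)) y))
        + (∑ i, (pd k (A1 i) y * pd i f y + A1 i y * pd k (pd i f) y))
        + (pd k A0 y * f y + A0 y * pd k f y) := by
  have hf1 : ∀ (a : Fin n), ContDiff ℝ (⊤ : ℕ∞) (pd a f) := fun a => contDiff_pd a hf
  have hf2 : ∀ (a b : Fin n), ContDiff ℝ (⊤ : ℕ∞) (pd a (pd b f)) :=
    fun a b => contDiff_pd a (hf1 b)
  have d2 : ∀ (i j : Fin n), DifferentiableAt ℝ (fun z => A2 i j z * pd i (pd j f) z) y :=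
    fun i j => ((hA2 i j).differentiable (by simp) y).mul ((hf2 i j).differentiable (by simp) y)
  have d2i : ∀ i : Fin n, DifferentiableAt ℝ (fun z => ∑ j, A2 i j z * pd i (pd j f) z) y :=
    fun i => DifferentiableAt.fun_sum fun j _ => d2 i j
  have d1 : ∀ i : Fin n, DifferentiableAt ℝ (fun z => A1 i z * pd i f z) y :=
    fun i => ((hA1 i).differentiable (by simp) y).mul ((hf1 i).differentiable (by simp) y)
  have h0 : op2 A2 A1 A0 f
      = fun x => ((∑ i, ∑ j, A2 i j x * pd i (pd j f) x) + (∑ i, A1 i x * pd i f x))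
          + A0 x * f x := by
    funext z; simp only [op2]
  rw [h0,
    pd_add (((DifferentiableAt.fun_sum fun i _ => d2i i)).fun_add
        (DifferentiableAt.fun_sum fun i _ => d1 i))
      ((hA0.differentiable (by simp) y).fun_mul (hf.differentiable (by simp) y)),
    pd_add (DifferentiableAt.fun_sum fun i _ => d2i i) (DifferentiableAt.fun_sum fun i _ => d1 i),
    pd_sum d2i, pd_sum d1,
    pd_mul (hA0.differentiable (by simp) y) (hf.differentiable (by simp) y)]
  congr 1
  · congr 1
    · refine Finset.sum_congr rfl fun i _ => ?_
      rw [pd_sum (fun j => d2 i j)]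
      exact Finset.sum_congr rfl fun j _ =>
        pd_mul ((hA2 i j).differentiable (by simp) y) ((hf2 i j).differentiable (by simp) y)
    · exact Finset.sum_congr rfl fun i _ =>
        pd_mul ((hA1 i).differentiable (by simp) y) ((hf1 i).differentiable (by simp) y)




private lemma sc2 {n : ℕ} (F : Fin n → Fin n → ℝ) :
    ∑ a, ∑ b, F a b = ∑ b, ∑ a, F a b := Finset.sum_comm

private lemma sc3 {n : ℕ} (F : Fin n → Fin n → Fin n → ℝ) :
    ∑ k, ∑ i, ∑ j, F k i j = ∑ i, ∑ j, ∑ k, F k i j := by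
  rw [Finset.sum_comm]
  exact Finset.sum_congr rfl fun _ _ => Finset.sum_comm

private lemma srev3 {n : ℕ} (F : Fin n → Fin n → Fin n → ℝ) :
    ∑ i, ∑ j, ∑ k, F i j k = ∑ k, ∑ j, ∑ i, F i j k := by
  calc (∑ i, ∑ j, ∑ k, F i j k)
      = ∑ i, ∑ k, ∑ j, F i j k := Finset.sum_congr rfl fun _ _ => Finset.sum_comm
    _ = ∑ k, ∑ i, ∑ j, F i j k := Finset.sum_comm
    _ = ∑ k, ∑ j, ∑ i, F i j k := Finset.sum_congr rfl fun _ _ => Finset.sum_comm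

lemma key_algebra (n : ℕ) (lam mu dlt D : ℝ) (hdlt : dlt = mu - lam)
    (Xv : Fin n → ℝ) (B : Fin n → Fin n → ℝ)
    (a2 : Fin n → Fin n → ℝ) (d2 : Fin n → Fin n → Fin n → ℝ)
    (a1 : Fin n → ℝ) (d1 : Fin n → Fin n → ℝ)
    (a0 f0 : ℝ) (d0 : Fin n → ℝ)
    (f1 : Fin n → ℝ) (f2 : Fin n → Fin n → ℝ) (f3 : Fin n → Fin n → Fin n → ℝ)
    (hf2 : ∀ a b, f2 a b = f2 b a) (hf3 : ∀ a b c, f3 a b c = f3 b c a) :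
    (∑ k, Xv k *
        ((∑ i, ∑ j, (d2 k i j * f2 i j + a2 i j * f3 k i j))
          + (∑ i, (d1 k i * f1 i + a1 i * f2 k i))
          + (d0 k * f0 + a0 * f1 k)))
      + (mu * D) * ((∑ i, ∑ j, a2 i j * f2 i j) + (∑ i, a1 i * f1 i) + a0 * f0)
      - ((∑ i, ∑ j, a2 i j *
            ((∑ k, (B k j * f2 i k + (B k i * f2 j k + Xv k * f3 i j k)))
              + (lam * D) * f2 i j))
        + (∑ i, a1 i * ((∑ k, (B k i * f1 k + Xv k * f2 i k)) + (lam * D) * f1 i))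
        + a0 * ((∑ k, Xv k * f1 k) + (lam * D) * f0))
    = (∑ i, ∑ j, ((∑ k, Xv k * d2 k i j) - (∑ k, a2 k j * B i k) - (∑ k, a2 i k * B j k)
          + (dlt * D) * a2 i j) * f2 i j)
      + (∑ i, ((∑ k, Xv k * d1 k i) - (∑ k, a1 k * B i k) + (dlt * D) * a1 i) * f1 i)
      + ((∑ k, Xv k * d0 k) + (dlt * D) * a0) * f0 := by
  subst hdlt
  simp only [Finset.mul_sum, Finset.sum_mul, mul_add, add_mul, mul_sub, sub_mul,
    Finset.sum_add_distrib, Finset.sum_sub_distrib]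
  have c1 : (∑ k, ∑ i, ∑ j, Xv k * (d2 k i j * f2 i j))
      = ∑ i, ∑ j, ∑ k, Xv k * d2 k i j * f2 i j := by
    rw [sc3 (fun k i j => Xv k * (d2 k i j * f2 i j))]
    exact Finset.sum_congr rfl fun i _ => Finset.sum_congr rfl fun j _ =>
      Finset.sum_congr rfl fun k _ => by ring
  have c2 : (∑ k, ∑ i, ∑ j, Xv k * (a2 i j * f3 k i j))
      = ∑ i, ∑ j, ∑ k, a2 i j * (Xv k * f3 i j k) := by
    rw [sc3 (fun k i j => Xv k * (a2 i j * f3 k i j))]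
    exact Finset.sum_congr rfl fun i _ => Finset.sum_congr rfl fun j _ =>
      Finset.sum_congr rfl fun k _ => by rw [hf3 k i j]; ring
  have c3 : (∑ k, ∑ i, Xv k * (d1 k i * f1 i)) = ∑ i, ∑ k, Xv k * d1 k i * f1 i := by
    rw [sc2 (fun k i => Xv k * (d1 k i * f1 i))]
    exact Finset.sum_congr rfl fun i _ => Finset.sum_congr rfl fun k _ => by ring
  have c4 : (∑ k, ∑ i, Xv k * (a1 i * f2 k i)) = ∑ i, ∑ k, a1 i * (Xv k * f2 i k) := by
    rw [sc2 (fun k i => Xv k * (a1 i * f2 k i))]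
    exact Finset.sum_congr rfl fun i _ => Finset.sum_congr rfl fun k _ => by
      rw [hf2 k i]; ring
  have c5 : (∑ k, Xv k * (a0 * f1 k)) = ∑ k, a0 * (Xv k * f1 k) :=
    Finset.sum_congr rfl fun k _ => by ring
  have c6 : (∑ i, ∑ j, ∑ k, a2 i j * (B k j * f2 i k))
      = ∑ i, ∑ j, ∑ k, a2 i k * B j k * f2 i j := by
    refine Finset.sum_congr rfl fun i _ => ?_
    rw [Finset.sum_comm]
    exact Finset.sum_congr rfl fun j _ => Finset.sum_congr rfl fun k _ => by ring
  have c7 : (∑ i, ∑ j, ∑ k, a2 i j * (B k i * f2 j k))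
      = ∑ i, ∑ j, ∑ k, a2 k j * B i k * f2 i j := by
    rw [srev3 (fun i j k => a2 i j * (B k i * f2 j k))]
    exact Finset.sum_congr rfl fun i _ => Finset.sum_congr rfl fun j _ =>
      Finset.sum_congr rfl fun k _ => by rw [hf2 j i]; ring
  have c8 : (∑ i, ∑ k, a1 i * (B k i * f1 k)) = ∑ i, ∑ k, a1 k * B i k * f1 i := by
    rw [sc2 (fun i k => a1 i * (B k i * f1 k))]
    exact Finset.sum_congr rfl fun i _ => Finset.sum_congr rfl fun k _ => by ring
  have c9 : (∑ k, Xv k * (d0 k * f0)) = ∑ k, Xv k * d0 k * f0 :=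
    Finset.sum_congr rfl fun k _ => by ring
  have c10 : (∑ i, ∑ j, mu * D * (a2 i j * f2 i j)) = ∑ i, ∑ j, mu * D * a2 i j * f2 i j :=
    Finset.sum_congr rfl fun i _ => Finset.sum_congr rfl fun j _ => by ring
  have c11 : (∑ i, ∑ j, a2 i j * (lam * D * f2 i j)) = ∑ i, ∑ j, lam * D * a2 i j * f2 i j :=
    Finset.sum_congr rfl fun i _ => Finset.sum_congr rfl fun j _ => by ring
  have c12 : (∑ i, mu * D * (a1 i * f1 i)) = ∑ i, mu * D * a1 i * f1 i :=
    Finset.sum_congr rfl fun i _ => by ring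
  have c13 : (∑ i, a1 i * (lam * D * f1 i)) = ∑ i, lam * D * a1 i * f1 i :=
    Finset.sum_congr rfl fun i _ => by ring
  have c14 : (∑ i, ∑ j, ∑ k, Xv k * d2 k i j * f2 i j)
      = ∑ i, ∑ j, ∑ k, Xv k * d2 k i j * f2 i j := rfl
  rw [c1, c2, c3, c4, c5, c6, c7, c8, c9, c10, c11, c12, c13]
  ring


end Helpers

/-- for an affine vector field `X^i(x) = B^i_j x^j + c^i`, the
operator `L_X^μ ∘ A − A ∘ L_X^λ` is again a second-order operator whose
coefficients are exactly the weight-`δ` Lie derivatives of the coefficients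
of `A`. -/

theorem affine_action_on_operators_is_symbolwise
    (n : ℕ) (lam mu dlt : ℝ) (hdlt : dlt = mu - lam)
    (B : Fin n → Fin n → ℝ) (c : Fin n → ℝ)
    (X : Fin n → (Fin n → ℝ) → ℝ)
    (hX : ∀ i x, X i x = (∑ j, B i j * x j) + c i)
    (A2 : Fin n → Fin n → (Fin n → ℝ) → ℝ)
    (A1 : Fin n → (Fin n → ℝ) → ℝ) (A0 : (Fin n → ℝ) → ℝ)
    (hA2 : ∀ i j, ContDiff ℝ (⊤ : ℕ∞) (A2 i j)) (hA2sym : ∀ i j, A2 i j = A2 j i)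
    (hA1 : ∀ i, ContDiff ℝ (⊤ : ℕ∞) (A1 i)) (hA0 : ContDiff ℝ (⊤ : ℕ∞) A0)
    (f : (Fin n → ℝ) → ℝ) (hf : ContDiff ℝ (⊤ : ℕ∞) f) (x : Fin n → ℝ) :
    lieF X mu (op2 A2 A1 A0 f) x - op2 A2 A1 A0 (lieF X lam f) x
      = op2 (lieS2 X dlt A2) (lieS1 X dlt A1) (lieF X dlt A0) f x := by
  have hf1 : ∀ a : Fin n, ContDiff ℝ (⊤ : ℕ∞) (pd a f) := fun a => contDiff_pd a hf
  have hsym2f : ∀ a b : Fin n, pd a (pd b f) = pd b (pd a f) :=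
    fun a b => funext fun y => pd_comm hf y
  have hsym3 : ∀ k a b : Fin n, pd k (pd a (pd b f)) x = pd a (pd b (pd k f)) x := by
    intro k a b
    calc pd k (pd a (pd b f)) x = pd a (pd k (pd b f)) x := pd_comm (hf1 b) x
      _ = pd a (pd b (pd k f)) x := by rw [hsym2f k b]
  have e0 : ∀ k, pd k (op2 A2 A1 A0 f) x
      = (∑ i, ∑ j, (pd k (A2 i j) x * pd i (pd j f) x + A2 i j x * pd k (pd i (pd j f)) x))
        + (∑ i, (pd k (A1 i) x * pd i f x + A1 i x * pd k (pd i f) x))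
        + (pd k A0 x * f x + A0 x * pd k f x) := fun k => pd_op2 hA2 hA1 hA0 hf k x
  have e1 : ∀ i, pd i (lieF X lam f) x
      = (∑ k, (B k i * pd k f x + X k x * pd i (pd k f) x))
        + lam * (∑ m, B m m) * pd i f x := fun i => pd_lieF hX lam f hf i x
  have e2 : ∀ i j, pd i (pd j (lieF X lam f)) x
      = (∑ k, (B k j * pd i (pd k f) x
          + (B k i * pd j (pd k f) x + X k x * pd i (pd j (pd k f)) x)))
        + lam * (∑ m, B m m) * pd i (pd j f) x := fun i j => pd_pd_lieF hX lam f hf i j x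
  have epdX : ∀ k i : Fin n, pd k (X i) x = B i k := fun k i => pd_X hX k i x
  have eD : divg X x = ∑ m, B m m := divg_X hX x
  show ((∑ k, X k x * pd k (op2 A2 A1 A0 f) x) + mu * divg X x * op2 A2 A1 A0 f x)
      - ((∑ i, ∑ j, A2 i j x * pd i (pd j (lieF X lam f)) x)
        + (∑ i, A1 i x * pd i (lieF X lam f) x) + A0 x * lieF X lam f x)
    = (∑ i, ∑ j, lieS2 X dlt A2 i j x * pd i (pd j f) x)
      + (∑ i, lieS1 X dlt A1 i x * pd i f x) + lieF X dlt A0 x * f x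
  simp only [e0, e1, e2, lieS2, lieS1, lieF, op2, epdX, eD]
  exact key_algebra n lam mu dlt (∑ m, B m m) hdlt (fun k => X k x) B
    (fun i j => A2 i j x) (fun k i j => pd k (A2 i j) x)
    (fun i => A1 i x) (fun k i => pd k (A1 i) x)
    (A0 x) (f x) (fun k => pd k A0 x)
    (fun a => pd a f x) (fun a b => pd a (pd b f) x)
    (fun a b c => pd a (pd b (pd c f)) x)
    (fun a b => pd_comm hf x) hsym3
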